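/- Stability of the interpretation under distributivity: ⟦A ⇒ (B₁ ∧ B₂)⟧ = ⟦(A ⇒ B₁) ∧ (A ⇒ B₂)⟧; more generally, if A ≡ B (the congruence generated by the distributivity isomorphism), then ⟦A⟧ = ⟦B⟧. -/

import Mathlib

inductive Tm : Type
| var : ℕ → Tm
| lam : Tm → Tm
| app : Tm → Tm → Tm
| pair : Tm → Tm → Tm
| p1 : Tm → Tm
| p2 : Tm → Tm

namespace Tm

/-- Renaming of de Bruijn indices. -/
def rename (f : ℕ → ℕ) : Tm → Tm
| var n => var (f n)
| lam t => lam (t.rename (fun n => match n with | 0 => 0 | n+1 => f n + 1))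
| app t s => app (t.rename f) (s.rename f)
| pair t s => pair (t.rename f) (s.rename f)
| p1 t => p1 (t.rename f)
| p2 t => p2 (t.rename f)

/-- Capture-avoiding simultaneous substitution. -/
def subst (σ : ℕ → Tm) : Tm → Tm
| var n => σ n
| lam t => lam (t.subst (fun n => match n with | 0 => var 0 | n+1 => (σ n).rename Nat.succ))
| app t s => app (t.subst σ) (s.subst σ)
| pair t s => pair (t.subst σ) (s.subst σ)
| p1 t => p1 (t.subst σ)
| p2 t => p2 (t.subst σ)

/-- Substitution of the single (outermost) free variable: t[x := s]. -/
def subst1 (t s : Tm) : Tm :=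
  t.subst (fun n => match n with | 0 => s | n+1 => var n)

/-- One-step reduction of the distributive λ-calculus. -/
inductive Step : Tm → Tm → Prop
| beta (t s) : Step (app (lam t) s) (t.subst1 s)
| proj1 (t1 t2) : Step (p1 (pair t1 t2)) t1
| proj2 (t1 t2) : Step (p2 (pair t1 t2)) t2
| pairApp (t s u) : Step (app (pair t s) u) (pair (app t u) (app s u))
| projLam1 (t) : Step (p1 (lam t)) (lam (p1 t))
| projLam2 (t) : Step (p2 (lam t)) (lam (p2 t))
| lam_cong {t t'} : Step t t' → Step (lam t) (lam t')
| appL {t t' s} : Step t t' → Step (app t s) (app t' s)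
| appR {t s s'} : Step s s' → Step (app t s) (app t s')
| pairL {t t' s} : Step t t' → Step (pair t s) (pair t' s)
| pairR {t s s'} : Step s s' → Step (pair t s) (pair t s')
| p1_cong {t t'} : Step t t' → Step (p1 t) (p1 t')
| p2_cong {t t'} : Step t t' → Step (p2 t) (p2 t')

/-- Many-step reduction. -/
def Steps : Tm → Tm → Prop := Relation.ReflTransGen Step

/-- A term is normal when no rule applies anywhere in it. -/
def Normal (t : Tm) : Prop := ¬ ∃ s, Step t s

/-- All free variables are < k. -/
def closedUnder : ℕ → Tm → Prop
| k, var n => n < k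
| k, lam t => closedUnder (k+1) t
| k, app t s => closedUnder k t ∧ closedUnder k s
| k, pair t s => closedUnder k t ∧ closedUnder k s
| k, p1 t => closedUnder k t
| k, p2 t => closedUnder k t

def Closed (t : Tm) : Prop := closedUnder 0 t

/-- Values: variables, abstractions, pairs. -/
def IsValue : Tm → Prop
| var _ => True
| lam _ => True
| pair _ _ => True
| _ => False

/-- Neutral terms: variables, applications, projections. -/
def Neutral : Tm → Prop
| var _ => True
| app _ _ => True
| p1 _ => True
| p2 _ => True
| _ => False

/-- Strong normalization: every reduction sequence is finite. -/
def SN (t : Tm) : Prop := Acc (fun a b => Step b a) t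

end Tm

inductive Ty : Type
| base : Ty
| arr : Ty → Ty → Ty
| conj : Ty → Ty → Ty

/-- The least congruence containing distributivity A ⇒ (B ∧ C) ≡ (A ⇒ B) ∧ (A ⇒ C). -/
inductive Iso : Ty → Ty → Prop
| refl (A) : Iso A A
| symm {A B} : Iso A B → Iso B A
| trans {A B C} : Iso A B → Iso B C → Iso A C
| distr (A B C) : Iso (Ty.arr A (Ty.conj B C)) (Ty.conj (Ty.arr A B) (Ty.arr A C))
| arrL {A C} (B) : Iso A C → Iso (Ty.arr A B) (Ty.arr C B)
| arrR {B C} (A) : Iso B C → Iso (Ty.arr A B) (Ty.arr A C)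
| conjL {A C} (B) : Iso A C → Iso (Ty.conj A B) (Ty.conj C B)
| conjR {B C} (A) : Iso B C → Iso (Ty.conj A B) (Ty.conj A C)

/-- Typing, with contexts as lists of types (de Bruijn), including the conversion rule for ≡. -/
inductive Typing : List Ty → Tm → Ty → Prop
| var {Γ n A} : Γ[n]? = some A → Typing Γ (Tm.var n) A
| lam {Γ t A B} : Typing (A :: Γ) t B → Typing Γ (Tm.lam t) (Ty.arr A B)
| app {Γ t s A B} : Typing Γ t (Ty.arr A B) → Typing Γ s A → Typing Γ (Tm.app t s) B
| pair {Γ t s A B} : Typing Γ t A → Typing Γ s B → Typing Γ (Tm.pair t s) (Ty.conj A B)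
| p1 {Γ t A B} : Typing Γ t (Ty.conj A B) → Typing Γ (Tm.p1 t) A
| p2 {Γ t A B} : Typing Γ t (Ty.conj A B) → Typing Γ (Tm.p2 t) B
| iso {Γ t A B} : Typing Γ t A → Iso A B → Typing Γ t B

/-- Reducibility interpretation of types. -/
def Red : Ty → Tm → Prop
| Ty.base, t => Tm.SN t
| Ty.arr A B, t => ∀ s, Red A s → Red B (Tm.app t s)
| Ty.conj A B, t => Red A (Tm.p1 t) ∧ Red B (Tm.p2 t)

/-! The interpretation of every type is a reducibility candidate: a set of strongly normalising
terms that is closed under reduction and contains every neutral term all of whose one-step reducts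
it contains. For the distributivity law both sides quantify over `s ∈ ⟦A⟧`: the left one asks for
`πᵢ (t s) ∈ ⟦Bᵢ⟧`, the right one for `(πᵢ t) s ∈ ⟦Bᵢ⟧`. Each of these terms is neutral, and by
induction on the strong normalisation of `t` and `s` every one-step reduct of one of them is
reached by reducing the other, thanks to `⟨t₁, t₂⟩ s → ⟨t₁ s, t₂ s⟩` and
`πᵢ (λx.u) → λx.πᵢ u` (up to one β-expansion when `t` is an abstraction). Going from
`(π₁ t) s` to `π₁ (t s)` also needs `(π₂ t) s` to be strongly normalising, for the reduct
`π₁ ⟨t₁ s, t₂ s⟩`. Stability under `≡` then follows by induction on `≡`, since `⟦·⟧` is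
compositional. -/

namespace Tm

def liftRen (f : ℕ → ℕ) : ℕ → ℕ
| 0 => 0
| n+1 => f n + 1

def liftSubst (σ : ℕ → Tm) : ℕ → Tm
| 0 => var 0
| n+1 => (σ n).rename Nat.succ

theorem rename_rename (f g : ℕ → ℕ) (t : Tm) : (t.rename g).rename f = t.rename (f ∘ g) := by
  induction t generalizing f g with
  | lam t ih => simp only [rename, ih]; congr 2; funext n; cases n <;> rfl
  | _ => simp_all [rename]

theorem subst_rename (σ : ℕ → Tm) (f : ℕ → ℕ) (t : Tm) :
    (t.rename f).subst σ = t.subst (σ ∘ f) := by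
  induction t generalizing σ f with
  | lam t ih => simp only [rename, subst, ih]; congr 2; funext n; cases n <;> rfl
  | _ => simp_all [rename, subst]

theorem rename_subst (f : ℕ → ℕ) (σ : ℕ → Tm) (t : Tm) :
    (t.subst σ).rename f = t.subst (rename f ∘ σ) := by
  induction t generalizing f σ with
  | lam t ih =>
    simp only [rename, subst, ih]
    congr 2; funext n; cases n <;> simp [rename_rename] <;> rfl
  | _ => simp_all [rename, subst]

theorem subst_subst (σ τ : ℕ → Tm) (t : Tm) :
    (t.subst τ).subst σ = t.subst (subst σ ∘ τ) := by
  induction t generalizing σ τ with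
  | lam t ih =>
    simp only [subst, ih]
    congr 2; funext n; cases n <;> simp [subst_rename, rename_subst] <;> rfl
  | _ => simp_all [subst]

theorem subst_var (t : Tm) : t.subst var = t := by
  induction t with
  | lam t ih =>
    exact congrArg lam ((congrArg t.subst (funext fun n => by cases n <;> rfl)).trans ih)
  | _ => simp_all [subst]

theorem rename_subst1 (f : ℕ → ℕ) (t s : Tm) :
    (t.subst1 s).rename f = (t.rename (liftRen f)).subst1 (s.rename f) := by
  simp only [subst1, rename_subst, subst_rename]
  exact congrArg t.subst (funext fun n => by cases n <;> rfl)

theorem subst_subst1 (σ : ℕ → Tm) (t s : Tm) :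
    (t.subst1 s).subst σ = (t.subst (liftSubst σ)).subst1 (s.subst σ) := by
  simp only [subst1, subst_subst]
  refine congrArg t.subst (funext fun n => ?_)
  cases n <;> simp [liftSubst, subst, subst_rename, Function.comp_def, subst_var]

theorem Step.rename {t t' : Tm} (h : Step t t') (f : ℕ → ℕ) : Step (t.rename f) (t'.rename f) := by
  induction h generalizing f with
  | beta t s => rw [rename_subst1]; exact .beta _ _
  | _ => constructor <;> simp_all

theorem Step.subst {t t' : Tm} (h : Step t t') (σ : ℕ → Tm) : Step (t.subst σ) (t'.subst σ) := by
  induction h generalizing σ with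
  | beta t s => rw [subst_subst1]; exact .beta _ _
  | _ => constructor <;> simp_all

theorem steps_subst {σ σ' : ℕ → Tm} (h : ∀ n, Steps (σ n) (σ' n)) (t : Tm) :
    Steps (t.subst σ) (t.subst σ') := by
  induction t generalizing σ σ' with
  | var n => exact h n
  | lam t ih =>
    refine (ih fun n => ?_).lift lam fun _ _ => .lam_cong
    cases n
    · exact .refl
    · exact (h _).lift _ fun _ _ h => h.rename _
  | app t s iht ihs =>
    exact ((iht h).lift (app · _) fun _ _ => .appL).trans ((ihs h).lift _ fun _ _ => .appR)
  | pair t s iht ihs =>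
    exact ((iht h).lift (pair · _) fun _ _ => .pairL).trans ((ihs h).lift _ fun _ _ => .pairR)
  | p1 t ih => exact (ih h).lift _ fun _ _ => .p1_cong
  | p2 t ih => exact (ih h).lift _ fun _ _ => .p2_cong

theorem Step.steps_subst1 {s s' : Tm} (h : Step s s') (t : Tm) :
    Steps (t.subst1 s) (t.subst1 s') :=
  steps_subst (fun n => by cases n; exacts [.single h, .refl]) t

theorem SN.of_map {f : Tm → Tm} (hf : ∀ {a b}, Step a b → Step (f a) (f b)) {t : Tm}
    (h : SN (f t)) : SN t :=
  Subrelation.accessible hf (InvImage.accessible f h)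

theorem SN.of_app {t s : Tm} (h : SN (app t s)) : SN t ∧ SN s :=
  ⟨h.of_map .appL, h.of_map .appR⟩

@[elab_as_elim]
theorem SN.induction₂ {motive : Tm → Tm → Prop} {t s : Tm} (ht : SN t) (hs : SN s)
    (ih : ∀ t s, (∀ t', Step t t' → motive t' s) → (∀ s', Step s s' → motive t s') → motive t s) :
    motive t s := by
  induction ht generalizing s with | intro t _ iht
  induction hs with | intro s hs ihs
  exact ih t s (fun t' h => iht t' h (Acc.intro s hs)) ihs

structure IsCandidate (P : Tm → Prop) : Prop where
  sn {t : Tm} : P t → SN t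
  step {t t' : Tm} : P t → Step t t' → P t'
  of_neutral {t : Tm} : Neutral t → (∀ t', Step t t' → P t') → P t

theorem isCandidate_sn : IsCandidate SN where
  sn h := h
  step h st := h.inv st
  of_neutral _ h := Acc.intro _ h

namespace IsCandidate

variable {P Q : Tm → Prop}

theorem steps (hP : IsCandidate P) {t t' : Tm} (h : P t) (st : Steps t t') : P t' := by
  induction st with
  | refl => exact h
  | tail _ st ih => exact hP.step ih st

theorem var (hP : IsCandidate P) (n : ℕ) : P (var n) :=
  hP.of_neutral trivial fun _ st => nomatch st

theorem arr (hP : IsCandidate P) (hQ : IsCandidate Q) :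
    IsCandidate (fun t => ∀ s, P s → Q (app t s)) where
  sn h := SN.of_map .appL (hQ.sn (h _ (hP.var 0)))
  step h st s hs := hQ.step (h s hs) (.appL st)
  of_neutral hn h s hs := by
    induction hP.sn hs with | intro s _ ih
    refine hQ.of_neutral trivial fun u hu => ?_
    cases hu with
    | beta => exact hn.elim
    | pairApp => exact hn.elim
    | appL st => exact h _ st s hs
    | appR st => exact ih _ st (hP.step hs st)

theorem conj (hP : IsCandidate P) (hQ : IsCandidate Q) :
    IsCandidate (fun t => P (p1 t) ∧ Q (p2 t)) where
  sn h := SN.of_map .p1_cong (hP.sn h.1)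
  step h st := ⟨hP.step h.1 (.p1_cong st), hQ.step h.2 (.p2_cong st)⟩
  of_neutral hn h := by
    refine ⟨hP.of_neutral trivial fun u hu => ?_, hQ.of_neutral trivial fun u hu => ?_⟩
    · cases hu with
      | proj1 | projLam1 => exact hn.elim
      | p1_cong st => exact (h _ st).1
    · cases hu with
      | proj2 | projLam2 => exact hn.elim
      | p2_cong st => exact (h _ st).2

theorem app_lam (hP : IsCandidate P) {t s : Tm} (hs : SN s) (h : P (t.subst1 s)) :
    P (app (lam t) s) := by
  have ht : SN t := SN.of_map (Step.subst · _) (hP.sn h)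
  revert h
  refine SN.induction₂ ht hs fun t s iht ihs h => ?_
  refine hP.of_neutral trivial fun u hu => ?_
  cases hu with
  | beta => exact h
  | appL st => cases st with | lam_cong st => exact iht _ st (hP.step h (st.subst _))
  | appR st => exact ihs _ st (hP.steps h (st.steps_subst1 t))

theorem p1_pair (hP : IsCandidate P) {a b : Tm} (ha : P a) (hb : SN b) : P (p1 (pair a b)) := by
  have ha' : SN a := hP.sn ha
  revert ha
  refine SN.induction₂ ha' hb fun a b iha ihb ha => ?_
  refine hP.of_neutral trivial fun u hu => ?_
  cases hu with
  | proj1 => exact ha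
  | p1_cong st => cases st with
    | pairL st => exact iha _ st (hP.step ha st)
    | pairR st => exact ihb _ st ha

theorem p2_pair (hP : IsCandidate P) {a b : Tm} (ha : SN a) (hb : P b) : P (p2 (pair a b)) := by
  have hb' : SN b := hP.sn hb
  revert hb
  refine SN.induction₂ ha hb' fun a b iha ihb hb => ?_
  refine hP.of_neutral trivial fun u hu => ?_
  cases hu with
  | proj2 => exact hb
  | p2_cong st => cases st with
    | pairL st => exact iha _ st hb
    | pairR st => exact ihb _ st (hP.step hb st)

theorem app_p1 (hP : IsCandidate P) {t s : Tm} (h : P (p1 (app t s))) : P (app (p1 t) s) := by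
  obtain ⟨ht, hs⟩ := (SN.of_map .p1_cong (hP.sn h)).of_app
  revert h
  refine SN.induction₂ ht hs fun t s iht ihs h => ?_
  refine hP.of_neutral trivial fun u hu => ?_
  cases hu with
  | appL st => cases st with
    | proj1 => exact hP.step (hP.step h (.p1_cong (.pairApp _ _ _))) (.proj1 _ _)
    | projLam1 =>
      have hs : SN s := (SN.of_map .p1_cong (hP.sn h)).of_app.2
      exact hP.app_lam hs (hP.step h (.p1_cong (.beta _ _)))
    | p1_cong st => exact iht _ st (hP.step h (.p1_cong (.appL st)))
  | appR st => exact ihs _ st (hP.step h (.p1_cong (.appR st)))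

theorem app_p2 (hP : IsCandidate P) {t s : Tm} (h : P (p2 (app t s))) : P (app (p2 t) s) := by
  obtain ⟨ht, hs⟩ := (SN.of_map .p2_cong (hP.sn h)).of_app
  revert h
  refine SN.induction₂ ht hs fun t s iht ihs h => ?_
  refine hP.of_neutral trivial fun u hu => ?_
  cases hu with
  | appL st => cases st with
    | proj2 => exact hP.step (hP.step h (.p2_cong (.pairApp _ _ _))) (.proj2 _ _)
    | projLam2 =>
      have hs : SN s := (SN.of_map .p2_cong (hP.sn h)).of_app.2
      exact hP.app_lam hs (hP.step h (.p2_cong (.beta _ _)))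
    | p2_cong st => exact iht _ st (hP.step h (.p2_cong (.appL st)))
  | appR st => exact ihs _ st (hP.step h (.p2_cong (.appR st)))

theorem p1_app (hP : IsCandidate P) {t s : Tm} (h₁ : P (app (p1 t) s))
    (h₂ : SN (app (p2 t) s)) : P (p1 (app t s)) := by
  obtain ⟨ht, hs⟩ := (hP.sn h₁).of_app
  revert h₁ h₂
  refine SN.induction₂ (ht.of_map .p1_cong) hs fun t s iht ihs h₁ h₂ => ?_
  refine hP.of_neutral trivial fun u hu => ?_
  cases hu with
  | p1_cong st => cases st with
    | beta => exact hP.step (hP.step h₁ (.appL (.projLam1 _))) (.beta _ _)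
    | pairApp => exact hP.p1_pair (hP.step h₁ (.appL (.proj1 _ _))) (h₂.inv (.appL (.proj2 _ _)))
    | appL st => exact iht _ st (hP.step h₁ (.appL (.p1_cong st))) (h₂.inv (.appL (.p2_cong st)))
    | appR st => exact ihs _ st (hP.step h₁ (.appR st)) (h₂.inv (.appR st))

theorem p2_app (hP : IsCandidate P) {t s : Tm} (h₁ : SN (app (p1 t) s))
    (h₂ : P (app (p2 t) s)) : P (p2 (app t s)) := by
  obtain ⟨ht, hs⟩ := (hP.sn h₂).of_app
  revert h₁ h₂
  refine SN.induction₂ (ht.of_map .p2_cong) hs fun t s iht ihs h₁ h₂ => ?_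
  refine hP.of_neutral trivial fun u hu => ?_
  cases hu with
  | p2_cong st => cases st with
    | beta => exact hP.step (hP.step h₂ (.appL (.projLam2 _))) (.beta _ _)
    | pairApp => exact hP.p2_pair (h₁.inv (.appL (.proj1 _ _))) (hP.step h₂ (.appL (.proj2 _ _)))
    | appL st => exact iht _ st (h₁.inv (.appL (.p1_cong st))) (hP.step h₂ (.appL (.p2_cong st)))
    | appR st => exact ihs _ st (h₁.inv (.appR st)) (hP.step h₂ (.appR st))

end IsCandidate

end Tm

theorem isCandidate_red (A : Ty) : Tm.IsCandidate (Red A) := by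
  induction A with
  | base => exact Tm.isCandidate_sn
  | arr A B ihA ihB => exact ihA.arr ihB
  | conj A B ihA ihB => exact ihA.conj ihB

theorem red_arr_conj_iff (A B₁ B₂ : Ty) (t : Tm) :
    Red (.arr A (.conj B₁ B₂)) t ↔ Red (.conj (.arr A B₁) (.arr A B₂)) t := by
  have h₁ := isCandidate_red B₁
  have h₂ := isCandidate_red B₂
  constructor
  · intro h
    exact ⟨fun s hs => h₁.app_p1 (h s hs).1, fun s hs => h₂.app_p2 (h s hs).2⟩
  · intro h s hs
    exact ⟨h₁.p1_app (h.1 s hs) (h₂.sn (h.2 s hs)), h₂.p2_app (h₁.sn (h.1 s hs)) (h.2 s hs)⟩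

theorem Iso.red_iff {A B : Ty} (h : Iso A B) (t : Tm) : Red A t ↔ Red B t := by
  induction h generalizing t with
  | refl => rfl
  | symm _ ih => exact (ih t).symm
  | trans _ _ ih₁ ih₂ => exact (ih₁ t).trans (ih₂ t)
  | distr => exact red_arr_conj_iff _ _ _ t
  | arrL _ _ ih => exact forall_congr' fun s => imp_congr (ih s) .rfl
  | arrR _ _ ih => exact forall_congr' fun s => imp_congr_right fun _ => ih _
  | conjL _ _ ih => exact and_congr (ih _) .rfl
  | conjR _ _ ih => exact and_congr .rfl (ih _)

theorem red_stability :
    (∀ (A B₁ B₂ : Ty) (t : Tm),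
      Red (Ty.arr A (Ty.conj B₁ B₂)) t ↔ Red (Ty.conj (Ty.arr A B₁) (Ty.arr A B₂)) t) ∧
    (∀ (A B : Ty), Iso A B → ∀ t : Tm, Red A t ↔ Red B t) :=
  ⟨red_arr_conj_iff, fun _ _ h => h.red_iff⟩
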